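/- Let q = (q₂, q₃, q₄) range over the open unit ball of ℝ³, set q₁ = √(1 − q₂² − q₃² − q₄²), and let S(q) be the Euler-parameter kinematics matrix S(q) = 2 · ![![q₁ + q₂²/q₁, q₄ + q₂q₃/q₁, −q₃ + q₂q₄/q₁], ![−q₄ + q₂q₃/q₁, q₁ + q₃²/q₁, q₂ + q₃q₄/q₁], ![q₃ + q₂q₄/q₁, −q₂ + q₃q₄/q₁, q₁ + q₄²/q₁]], with columns S₁(q), S₂(q), S₃(q). Then S(q) satisfies the condition S(q)ᵀ · [∂_{q₄}S₂(q) − ∂_{q₃}S₃(q) ∂_{q₂}S₃(q) − ∂_{q₄}S₁(q) ∂_{q₃}S₁(q) − ∂_{q₂}S₂(q)] = det(S(q)) · I₃, where the partial derivatives are with respect to the generalized coordinates (q₂, q₃, q₄). -/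

import Mathlib

set_option maxHeartbeats 4000000


open Matrix

noncomputable section

/-- Cross-product matrix `v^×` of `v ∈ ℝ³`, satisfying `crossMat v *ᵥ w = v ×₃ w`. -/
def crossMat (v : Fin 3 → ℝ) : Matrix (Fin 3) (Fin 3) ℝ :=
  !![0, -v 2, v 1; v 2, 0, -v 0; -v 1, v 0, 0]

/-- The 3×3 matrix `[u v w]` with columns `u`, `v`, `w`. -/
def colMat (u v w : Fin 3 → ℝ) : Matrix (Fin 3) (Fin 3) ℝ :=
  Matrix.of fun i j => ![u, v, w] j i

/-- `i`-th partial derivative `∂_{qᵢ} S (q)` of a matrix-valued map at `q`. -/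
def pd (i : Fin 3) (S : (Fin 3 → ℝ) → Matrix (Fin 3) (Fin 3) ℝ) (q : Fin 3 → ℝ) :
    Matrix (Fin 3) (Fin 3) ℝ :=
  Matrix.of fun j k => fderiv ℝ (fun p => S p j k) q (Pi.single i 1)

/-- `i`-th partial derivative of a vector-valued map at `q`. -/
def pdv (i : Fin 3) (f : (Fin 3 → ℝ) → (Fin 3 → ℝ)) (q : Fin 3 → ℝ) : Fin 3 → ℝ :=
  fun j => fderiv ℝ (fun p => f p j) q (Pi.single i 1)

/-- The `j`-th column `Sⱼ(q)` of `S q`. -/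
def colF (S : (Fin 3 → ℝ) → Matrix (Fin 3) (Fin 3) ℝ) (j : Fin 3) (q : Fin 3 → ℝ) :
    Fin 3 → ℝ :=
  fun i => S q i j

/-- `q₁ = √(1 − q₂² − q₃² − q₄²)` for generalized coordinates `r = (q₂, q₃, q₄)`. -/
def ep1 (r : Fin 3 → ℝ) : ℝ := Real.sqrt (1 - r 0 ^ 2 - r 1 ^ 2 - r 2 ^ 2)

/-- The Euler-parameter kinematics matrix `S(q)`. -/
def Seul (r : Fin 3 → ℝ) : Matrix (Fin 3) (Fin 3) ℝ :=
  (2 : ℝ) •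
    !![ep1 r + r 0 ^ 2 / ep1 r, r 2 + r 0 * r 1 / ep1 r, -r 1 + r 0 * r 2 / ep1 r;
       -r 2 + r 0 * r 1 / ep1 r, ep1 r + r 1 ^ 2 / ep1 r, r 0 + r 1 * r 2 / ep1 r;
       r 1 + r 0 * r 2 / ep1 r, -r 0 + r 1 * r 2 / ep1 r, ep1 r + r 2 ^ 2 / ep1 r]

def dE (r : Fin 3 → ℝ) (i : Fin 3) : ℝ :=
  -(r 0 * (Pi.single i 1 : Fin 3 → ℝ) 0 + r 1 * (Pi.single i 1 : Fin 3 → ℝ) 1 + r 2 * (Pi.single i 1 : Fin 3 → ℝ) 2) / ep1 r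
def dDiag (r : Fin 3 → ℝ) (i a : Fin 3) : ℝ :=
  2 * (dE r i + 2 * r a * (Pi.single i 1 : Fin 3 → ℝ) a / ep1 r - r a ^ 2 * dE r i / ep1 r ^ 2)
def dOffP (r : Fin 3 → ℝ) (i a b c : Fin 3) : ℝ :=
  2 * ((Pi.single i 1 : Fin 3 → ℝ) c + ((Pi.single i 1 : Fin 3 → ℝ) a * r b + r a * (Pi.single i 1 : Fin 3 → ℝ) b) / ep1 r
    - r a * r b * dE r i / ep1 r ^ 2)
def dOffM (r : Fin 3 → ℝ) (i a b c : Fin 3) : ℝ :=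
  2 * (-(Pi.single i 1 : Fin 3 → ℝ) c + ((Pi.single i 1 : Fin 3 → ℝ) a * r b + r a * (Pi.single i 1 : Fin 3 → ℝ) b) / ep1 r
    - r a * r b * dE r i / ep1 r ^ 2)

variable {r : Fin 3 → ℝ}

lemma hasF_sq (a : Fin 3) :
    HasFDerivAt (fun p : Fin 3 → ℝ => p a ^ 2)
      ((2 * r a) • (ContinuousLinearMap.proj a : (Fin 3 → ℝ) →L[ℝ] ℝ)) r := by
  have := (hasFDerivAt_apply (𝕜 := ℝ) a r).fun_mul (hasFDerivAt_apply (𝕜 := ℝ) a r)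
  simpa [pow_two, two_mul, add_smul] using this

lemma hasF_ep1 (hne : (1 : ℝ) - r 0 ^ 2 - r 1 ^ 2 - r 2 ^ 2 ≠ 0) :
    HasFDerivAt ep1 ((1 / (2 * ep1 r)) •
      ((((0 : (Fin 3 → ℝ) →L[ℝ] ℝ) - (2 * r 0) • .proj 0) - (2 * r 1) • .proj 1)
        - (2 * r 2) • .proj 2)) r := by
  have hg : HasFDerivAt (fun p : Fin 3 → ℝ => 1 - p 0 ^ 2 - p 1 ^ 2 - p 2 ^ 2)
      ((((0 : (Fin 3 → ℝ) →L[ℝ] ℝ) - (2 * r 0) • .proj 0) - (2 * r 1) • .proj 1)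
        - (2 * r 2) • .proj 2) r :=
    (((hasFDerivAt_const (1:ℝ) r).sub (hasF_sq 0)).sub (hasF_sq 1)).sub (hasF_sq 2)
  unfold ep1
  simpa using hg.sqrt hne

lemma hasF_inv (hne : (1 : ℝ) - r 0 ^ 2 - r 1 ^ 2 - r 2 ^ 2 ≠ 0) (hs : ep1 r ≠ 0) :
    HasFDerivAt (fun p => (ep1 p)⁻¹) ((-(ep1 r ^ 2)⁻¹) • ((1 / (2 * ep1 r)) •
      ((((0 : (Fin 3 → ℝ) →L[ℝ] ℝ) - (2 * r 0) • .proj 0) - (2 * r 1) • .proj 1)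
        - (2 * r 2) • .proj 2))) r :=
  (hasDerivAt_inv hs).comp_hasFDerivAt r (hasF_ep1 hne)

lemma Sdiag (hne : (1 : ℝ) - r 0 ^ 2 - r 1 ^ 2 - r 2 ^ 2 ≠ 0) (hs : ep1 r ≠ 0)
    (a i : Fin 3) :
    fderiv ℝ (fun p => 2 * (ep1 p + p a ^ 2 / ep1 p)) r (Pi.single i 1) = dDiag r i a := by
  simp only [div_eq_mul_inv]
  rw [(HasFDerivAt.const_mul ((hasF_ep1 hne).fun_add ((hasF_sq a).fun_mul (hasF_inv hne hs))) 2).fderiv]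
  unfold dDiag dE
  fin_cases i <;>
  · simp [Pi.single_apply]
    split_ifs <;> field_simp <;> ring

lemma Soffp (hne : (1 : ℝ) - r 0 ^ 2 - r 1 ^ 2 - r 2 ^ 2 ≠ 0) (hs : ep1 r ≠ 0)
    (a b c i : Fin 3) :
    fderiv ℝ (fun p => 2 * (p c + p a * p b / ep1 p)) r (Pi.single i 1) = dOffP r i a b c := by
  simp only [div_eq_mul_inv]
  rw [(HasFDerivAt.const_mul ((hasFDerivAt_apply (𝕜 := ℝ) c r).fun_add
    (((hasFDerivAt_apply (𝕜 := ℝ) a r).fun_mul (hasFDerivAt_apply (𝕜 := ℝ) b r)).fun_mul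
      (hasF_inv hne hs))) 2).fderiv]
  unfold dOffP dE
  fin_cases i <;>
  · simp [Pi.single_apply]
    split_ifs <;> field_simp <;> ring

lemma Soffm (hne : (1 : ℝ) - r 0 ^ 2 - r 1 ^ 2 - r 2 ^ 2 ≠ 0) (hs : ep1 r ≠ 0)
    (a b c i : Fin 3) :
    fderiv ℝ (fun p => 2 * (-p c + p a * p b / ep1 p)) r (Pi.single i 1) = dOffM r i a b c := by
  simp only [div_eq_mul_inv]
  rw [(HasFDerivAt.const_mul (((hasFDerivAt_apply (𝕜 := ℝ) c r).fun_neg).fun_add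
    (((hasFDerivAt_apply (𝕜 := ℝ) a r).fun_mul (hasFDerivAt_apply (𝕜 := ℝ) b r)).fun_mul
      (hasF_inv hne hs))) 2).fderiv]
  unfold dOffM dE
  fin_cases i <;>
  · simp [Pi.single_apply]
    split_ifs <;> field_simp <;> ring


theorem stmt_16 (r : Fin 3 → ℝ) (h : r 0 ^ 2 + r 1 ^ 2 + r 2 ^ 2 < 1) :
    (Seul r)ᵀ * colMat (pdv 2 (colF Seul 1) r - pdv 1 (colF Seul 2) r)
        (pdv 0 (colF Seul 2) r - pdv 2 (colF Seul 0) r)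
        (pdv 1 (colF Seul 0) r - pdv 0 (colF Seul 1) r)
      = (Seul r).det • (1 : Matrix (Fin 3) (Fin 3) ℝ) := by
  have hpos : (0:ℝ) < 1 - r 0 ^ 2 - r 1 ^ 2 - r 2 ^ 2 := by linarith
  have hne : ((1:ℝ) - r 0 ^ 2 - r 1 ^ 2 - r 2 ^ 2) ≠ 0 := ne_of_gt hpos
  have hs : ep1 r ≠ 0 := (Real.sqrt_pos.mpr hpos).ne'
  have hs2 : ep1 r ^ 2 = 1 - r 0 ^ 2 - r 1 ^ 2 - r 2 ^ 2 := Real.sq_sqrt hpos.le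
  have A00 : ∀ i, pdv i (colF Seul 0) r 0 = dDiag r i 0 := fun i => Sdiag hne hs 0 i
  have A10 : ∀ i, pdv i (colF Seul 0) r 1 = dOffM r i 0 1 2 := fun i => Soffm hne hs 0 1 2 i
  have A20 : ∀ i, pdv i (colF Seul 0) r 2 = dOffP r i 0 2 1 := fun i => Soffp hne hs 0 2 1 i
  have A01 : ∀ i, pdv i (colF Seul 1) r 0 = dOffP r i 0 1 2 := fun i => Soffp hne hs 0 1 2 i
  have A11 : ∀ i, pdv i (colF Seul 1) r 1 = dDiag r i 1 := fun i => Sdiag hne hs 1 i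
  have A21 : ∀ i, pdv i (colF Seul 1) r 2 = dOffM r i 1 2 0 := fun i => Soffm hne hs 1 2 0 i
  have A02 : ∀ i, pdv i (colF Seul 2) r 0 = dOffM r i 0 2 1 := fun i => Soffm hne hs 0 2 1 i
  have A12 : ∀ i, pdv i (colF Seul 2) r 1 = dOffP r i 1 2 0 := fun i => Soffp hne hs 1 2 0 i
  have A22 : ∀ i, pdv i (colF Seul 2) r 2 = dDiag r i 2 := fun i => Sdiag hne hs 2 i
  have hp24 : ep1 r ^ 24 = (1 - r 0 ^ 2 - r 1 ^ 2 - r 2 ^ 2) ^ 12 := by rw [← hs2]; ring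
  have hp23 : ep1 r ^ 23 = (1 - r 0 ^ 2 - r 1 ^ 2 - r 2 ^ 2) ^ 11 * ep1 r := by rw [← hs2]; ring
  have hp22 : ep1 r ^ 22 = (1 - r 0 ^ 2 - r 1 ^ 2 - r 2 ^ 2) ^ 11 := by rw [← hs2]; ring
  have hp21 : ep1 r ^ 21 = (1 - r 0 ^ 2 - r 1 ^ 2 - r 2 ^ 2) ^ 10 * ep1 r := by rw [← hs2]; ring
  have hp20 : ep1 r ^ 20 = (1 - r 0 ^ 2 - r 1 ^ 2 - r 2 ^ 2) ^ 10 := by rw [← hs2]; ring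
  have hp19 : ep1 r ^ 19 = (1 - r 0 ^ 2 - r 1 ^ 2 - r 2 ^ 2) ^ 9 * ep1 r := by rw [← hs2]; ring
  have hp18 : ep1 r ^ 18 = (1 - r 0 ^ 2 - r 1 ^ 2 - r 2 ^ 2) ^ 9 := by rw [← hs2]; ring
  have hp17 : ep1 r ^ 17 = (1 - r 0 ^ 2 - r 1 ^ 2 - r 2 ^ 2) ^ 8 * ep1 r := by rw [← hs2]; ring
  have hp16 : ep1 r ^ 16 = (1 - r 0 ^ 2 - r 1 ^ 2 - r 2 ^ 2) ^ 8 := by rw [← hs2]; ring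
  have hp15 : ep1 r ^ 15 = (1 - r 0 ^ 2 - r 1 ^ 2 - r 2 ^ 2) ^ 7 * ep1 r := by rw [← hs2]; ring
  have hp14 : ep1 r ^ 14 = (1 - r 0 ^ 2 - r 1 ^ 2 - r 2 ^ 2) ^ 7 := by rw [← hs2]; ring
  have hp13 : ep1 r ^ 13 = (1 - r 0 ^ 2 - r 1 ^ 2 - r 2 ^ 2) ^ 6 * ep1 r := by rw [← hs2]; ring
  have hp12 : ep1 r ^ 12 = (1 - r 0 ^ 2 - r 1 ^ 2 - r 2 ^ 2) ^ 6 := by rw [← hs2]; ring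
  have hp11 : ep1 r ^ 11 = (1 - r 0 ^ 2 - r 1 ^ 2 - r 2 ^ 2) ^ 5 * ep1 r := by rw [← hs2]; ring
  have hp10 : ep1 r ^ 10 = (1 - r 0 ^ 2 - r 1 ^ 2 - r 2 ^ 2) ^ 5 := by rw [← hs2]; ring
  have hp9 : ep1 r ^ 9 = (1 - r 0 ^ 2 - r 1 ^ 2 - r 2 ^ 2) ^ 4 * ep1 r := by rw [← hs2]; ring
  have hp8 : ep1 r ^ 8 = (1 - r 0 ^ 2 - r 1 ^ 2 - r 2 ^ 2) ^ 4 := by rw [← hs2]; ring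
  have hp7 : ep1 r ^ 7 = (1 - r 0 ^ 2 - r 1 ^ 2 - r 2 ^ 2) ^ 3 * ep1 r := by rw [← hs2]; ring
  have hp6 : ep1 r ^ 6 = (1 - r 0 ^ 2 - r 1 ^ 2 - r 2 ^ 2) ^ 3 := by rw [← hs2]; ring
  have hp5 : ep1 r ^ 5 = (1 - r 0 ^ 2 - r 1 ^ 2 - r 2 ^ 2) ^ 2 * ep1 r := by rw [← hs2]; ring
  have hp4 : ep1 r ^ 4 = (1 - r 0 ^ 2 - r 1 ^ 2 - r 2 ^ 2) ^ 2 := by rw [← hs2]; ring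
  have hp3 : ep1 r ^ 3 = (1 - r 0 ^ 2 - r 1 ^ 2 - r 2 ^ 2) ^ 1 * ep1 r := by rw [← hs2]; ring
  ext a b
  fin_cases a <;> fin_cases b <;>
  · simp only [Matrix.mul_apply, Fin.sum_univ_three, Matrix.transpose_apply, colMat,
      Matrix.of_apply, Pi.sub_apply, Matrix.cons_val', Matrix.cons_val_zero, Matrix.cons_val_one,
      Matrix.head_cons, Matrix.head_fin_const, Matrix.cons_val_fin_one, Matrix.empty_val',
      Matrix.cons_val_two, Matrix.tail_cons, A00, A10, A20, A01, A11, A21, A02, A12, A22,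
      Matrix.smul_apply, Matrix.one_apply, smul_eq_mul]
    simp [Seul, dDiag, dOffP, dOffM, dE, Matrix.det_fin_three, Pi.single_apply]
    field_simp
    ring_nf
    try simp only [hp24, hp23, hp22, hp21, hp20, hp19, hp18, hp17, hp16, hp15, hp14, hp13, hp12, hp11, hp10, hp9, hp8, hp7, hp6, hp5, hp4, hp3, hs2]
    try ring
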